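/- For 0 < q < 1, the fractional q-integration operator I^α_{q,0+} of order α > 0 is bounded on L^1_q[0,b]: ‖I^α_{q,0+} f‖_{L^1_q[0,b]} ≤ (b^α/Γ_q(α+1)) ‖f‖_{L^1_q[0,b]}. -/

import Mathlib

noncomputable section
open Real

/-- q-bracket [α]_q = (1-q^α)/(1-q) (real exponent). -/
def qBracket (q α : ℝ) : ℝ := (1 - q ^ α) / (1 - q)

/-- infinite q-Pochhammer (a;q)_∞ = ∏_{k=0}^∞ (1 - q^k a). -/
def qPochInf (q a : ℝ) : ℝ := ∏' k : ℕ, (1 - q ^ k * a)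

/-- (a;q)_α = (a;q)_∞ / (q^α a;q)_∞. -/
def qPoch (q a α : ℝ) : ℝ := qPochInf q a / qPochInf q (q ^ α * a)

/-- q-Gamma function. -/
def qGamma (q x : ℝ) : ℝ := qPochInf q q / qPochInf q (q ^ x) * (1 - q) ^ (1 - x)

/-- Jackson q-integral ∫₀^a f(x) d_q x. -/
def jackson (q a : ℝ) (f : ℝ → ℝ) : ℝ := (1 - q) * a * ∑' m : ℕ, q ^ m * f (a * q ^ m)

/-- Jackson q-derivative. -/
def Dq (q : ℝ) (f : ℝ → ℝ) (x : ℝ) : ℝ := (f x - f (q * x)) / (x * (1 - q))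

/-- Riemann–Liouville fractional q-integral of order α with lower limit 0 (I⁰ = id). -/
def Iq (q α : ℝ) (f : ℝ → ℝ) (x : ℝ) : ℝ :=
  if α = 0 then f x
  else x ^ (α - 1) / qGamma q α * jackson q x (fun t => qPoch q (q * t / x) (α - 1) * f t)

/-- Riemann–Liouville fractional q-derivative D^α = D_q^{⌈α⌉} I^{⌈α⌉-α}. -/
def DqRL (q α : ℝ) (f : ℝ → ℝ) (x : ℝ) : ℝ :=
  (fun g => Dq q g)^[⌈α⌉₊] (fun y => Iq q ((⌈α⌉₊ : ℝ) - α) f y) x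

/-- bi-ordinal Hilfer fractional q-derivative of orders α,β and type μ. -/
def DbiHilfer (q α β μ : ℝ) (f : ℝ → ℝ) (x : ℝ) : ℝ :=
  Iq q (μ * (1 - α)) (fun y => Dq q (fun z => Iq q ((1 - μ) * (1 - β)) f z) y) x

/-- membership in L¹_q[0,b] : the defining Jackson series converges absolutely. -/
def MemL1q (q b : ℝ) (f : ℝ → ℝ) : Prop := Summable (fun m : ℕ => q ^ m * |f (b * q ^ m)|)

/-- the L¹_q[0,b] norm. -/
def L1qNorm (q b : ℝ) (f : ℝ → ℝ) : ℝ := (1 - q) * b * ∑' m : ℕ, q ^ m * |f (b * q ^ m)|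

/-!
At a Jackson node `x = b qⁿ` the fractional integral is a series over the nodes below it:
`qⁿ I^α f(b qⁿ) = (1 - q) bᵅ / Γ_q(α) · ∑ₘ q^{nα} (q^{m+1};q)_{α-1} q^{n+m} f(b q^{n+m})`.
Taking absolute values and summing over `n`, the terms with `n + m = j` collect (Fubini for
nonnegative double series) to `q^j |f(b q^j)|` times `∑_{n+m=j} q^{nα} (q^{m+1};q)_{α-1}`.
Writing the kernel as `(q^{m+1};q)_∞ / (q^{m+α};q)_∞`, the recursion
`(a;q)_∞ = (1 - a) (qa;q)_∞` evaluates this finite sum to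
`(q^{j+1};q)_∞ / ((1 - q^α) (q^{j+1+α};q)_∞) ≤ 1 / (1 - q^α)`, a discrete q-Beta integral.
Finally `Γ_q(α+1) = [α]_q Γ_q(α)` turns the constant into `bᵅ / Γ_q(α+1)`.
-/

open Finset

theorem tsum_antidiagonal_mul_mul (x y z : ℕ → ℝ) (j : ℕ) :
    ∑' p : antidiagonal j, x p.1.1 * y p.1.2 * z j =
      (∑ p ∈ antidiagonal j, x p.1 * y p.2) * z j := by
  rw [Finset.tsum_subtype (antidiagonal j) (fun p => x p.1 * y p.2 * z j), Finset.sum_mul]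

theorem summable_sigma_antidiagonal_mul_mul {x y z : ℕ → ℝ} (hx : 0 ≤ x) (hy : 0 ≤ y) (hz : 0 ≤ z)
    (hzs : Summable z) {C : ℝ} (hC : ∀ j, ∑ p ∈ antidiagonal j, x p.1 * y p.2 ≤ C) :
    Summable fun s : Σ j, antidiagonal j => x s.2.1.1 * y s.2.1.2 * z s.1 := by
  rw [summable_sigma_of_nonneg fun _ => mul_nonneg (mul_nonneg (hx _) (hy _)) (hz _)]
  refine ⟨fun j => .of_finite, .of_nonneg_of_le
    (fun j => tsum_nonneg fun _ => mul_nonneg (mul_nonneg (hx _) (hy _)) (hz _))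
    (fun j => ?_) (hzs.mul_left C)⟩
  rw [tsum_antidiagonal_mul_mul]
  exact mul_le_mul_of_nonneg_right (hC j) (hz j)

theorem mul_mul_add_comp_sigmaAntidiagonalEquivProd (x y z : ℕ → ℝ) :
    (fun p : ℕ × ℕ => x p.1 * y p.2 * z (p.1 + p.2)) ∘
      HasAntidiagonal.sigmaAntidiagonalEquivProd =
      fun s : Σ j, antidiagonal j => x s.2.1.1 * y s.2.1.2 * z s.1 := by
  ext ⟨j, p, hp⟩
  simp [mem_antidiagonal.mp hp]

theorem summable_mul_mul_add {x y z : ℕ → ℝ} (hx : 0 ≤ x) (hy : 0 ≤ y) (hz : 0 ≤ z)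
    (hzs : Summable z) {C : ℝ} (hC : ∀ j, ∑ p ∈ antidiagonal j, x p.1 * y p.2 ≤ C) :
    Summable fun p : ℕ × ℕ => x p.1 * y p.2 * z (p.1 + p.2) := by
  rw [← HasAntidiagonal.sigmaAntidiagonalEquivProd.summable_iff,
    mul_mul_add_comp_sigmaAntidiagonalEquivProd]
  exact summable_sigma_antidiagonal_mul_mul hx hy hz hzs hC

theorem tsum_tsum_mul_mul_add_le {x y z : ℕ → ℝ} (hx : 0 ≤ x) (hy : 0 ≤ y) (hz : 0 ≤ z)
    (hzs : Summable z) {C : ℝ} (hC : ∀ j, ∑ p ∈ antidiagonal j, x p.1 * y p.2 ≤ C) :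
    ∑' n, ∑' m, x n * y m * z (n + m) ≤ C * ∑' j, z j := by
  have hs := summable_sigma_antidiagonal_mul_mul hx hy hz hzs hC
  have hsum : ∑' p : ℕ × ℕ, x p.1 * y p.2 * z (p.1 + p.2) =
      ∑' s : Σ j, antidiagonal j, x s.2.1.1 * y s.2.1.2 * z s.1 :=
    (HasAntidiagonal.sigmaAntidiagonalEquivProd.tsum_eq _).symm.trans
      (congrArg tsum (mul_mul_add_comp_sigmaAntidiagonalEquivProd x y z))
  rw [← (summable_mul_mul_add hx hy hz hzs hC).tsum_prod, hsum,
    hs.tsum_sigma' fun _ => .of_finite, ← tsum_mul_left]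
  refine hs.sigma.tsum_le_tsum (fun j => ?_) (hzs.mul_left C)
  rw [tsum_antidiagonal_mul_mul]
  exact mul_le_mul_of_nonneg_right (hC j) (hz j)

section qPochInf

variable {q a : ℝ}

theorem summable_log_one_sub_pow_mul (hq0 : 0 ≤ q) (hq1 : q < 1) (a : ℝ) :
    Summable fun k : ℕ => Real.log (1 - q ^ k * a) := by
  simpa [sub_eq_add_neg] using
    Real.summable_log_one_add_of_summable ((summable_geometric_of_lt_one hq0 hq1).mul_right a).neg

theorem one_sub_pow_mul_pos (hq0 : 0 ≤ q) (hq1 : q < 1) (ha : a < 1) (k : ℕ) :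
    0 < 1 - q ^ k * a := by
  have := pow_nonneg hq0 k
  have := pow_le_one₀ hq0 hq1.le (n := k)
  rcases le_or_gt a 0 with ha0 | ha0 <;> nlinarith

theorem qPochInf_eq_exp_tsum_log (hq0 : 0 ≤ q) (hq1 : q < 1) (ha : a < 1) :
    qPochInf q a = Real.exp (∑' k : ℕ, Real.log (1 - q ^ k * a)) :=
  (Real.rexp_tsum_eq_tprod (one_sub_pow_mul_pos hq0 hq1 ha)
    (summable_log_one_sub_pow_mul hq0 hq1 a)).symm

theorem qPochInf_pos (hq0 : 0 ≤ q) (hq1 : q < 1) (ha : a < 1) : 0 < qPochInf q a := by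
  rw [qPochInf_eq_exp_tsum_log hq0 hq1 ha]
  exact Real.exp_pos _

theorem qPochInf_le_qPochInf {b : ℝ} (hq0 : 0 ≤ q) (hq1 : q < 1) (hab : a ≤ b) (hb : b < 1) :
    qPochInf q b ≤ qPochInf q a := by
  rw [qPochInf_eq_exp_tsum_log hq0 hq1 hb, qPochInf_eq_exp_tsum_log hq0 hq1 (hab.trans_lt hb),
    Real.exp_le_exp]
  refine (summable_log_one_sub_pow_mul hq0 hq1 b).tsum_le_tsum (fun k => ?_)
    (summable_log_one_sub_pow_mul hq0 hq1 a)
  exact Real.log_le_log (one_sub_pow_mul_pos hq0 hq1 hb k) (by gcongr)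

theorem qPochInf_eq_one_sub_mul (hq0 : 0 ≤ q) (hq1 : q < 1) (ha : a < 1) :
    qPochInf q a = (1 - a) * qPochInf q (q * a) := by
  have hqa : q * a < 1 := by
    rcases le_or_gt a 0 with ha0 | ha0 <;> nlinarith
  have hshift : (fun k : ℕ => 1 - q ^ (k + 1) * a) = fun k => 1 - q ^ k * (q * a) := by
    ext k; ring
  have hmul : Multipliable fun k : ℕ => 1 - q ^ (k + 1) * a := by
    rw [hshift]
    exact Real.multipliable_of_summable_log (one_sub_pow_mul_pos hq0 hq1 hqa)
      (summable_log_one_sub_pow_mul hq0 hq1 (q * a))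
  unfold qPochInf
  rw [tprod_eq_zero_mul' (f := fun k : ℕ => 1 - q ^ k * a) hmul, hshift, pow_zero, one_mul]

end qPochInf

section qPochInfRpow

variable {q : ℝ}

theorem qPochInf_rpow_pos (hq0 : 0 < q) (hq1 : q < 1) {s : ℝ} (hs : 0 < s) :
    0 < qPochInf q (q ^ s) :=
  qPochInf_pos hq0.le hq1 (Real.rpow_lt_one hq0.le hq1 hs)

theorem qPochInf_rpow_le_rpow (hq0 : 0 < q) (hq1 : q < 1) {s t : ℝ} (hs : 0 < s) (hst : s ≤ t) :
    qPochInf q (q ^ s) ≤ qPochInf q (q ^ t) :=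
  qPochInf_le_qPochInf hq0.le hq1 (Real.rpow_le_rpow_of_exponent_ge hq0 hq1.le hst)
    (Real.rpow_lt_one hq0.le hq1 hs)

theorem qPochInf_rpow_eq_one_sub_mul (hq0 : 0 < q) (hq1 : q < 1) {s : ℝ} (hs : 0 < s) :
    qPochInf q (q ^ s) = (1 - q ^ s) * qPochInf q (q ^ (s + 1)) := by
  rw [qPochInf_eq_one_sub_mul hq0.le hq1 (Real.rpow_lt_one hq0.le hq1 hs),
    Real.rpow_add_one hq0.ne', mul_comm q]

end qPochInfRpow

section qGamma

variable {q : ℝ}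

theorem qGamma_pos (hq0 : 0 < q) (hq1 : q < 1) {x : ℝ} (hx : 0 < x) : 0 < qGamma q x :=
  mul_pos (div_pos (qPochInf_pos hq0.le hq1 hq1) (qPochInf_rpow_pos hq0 hq1 hx))
    (Real.rpow_pos_of_pos (sub_pos.2 hq1) _)

theorem one_sub_mul_rpow_div_qGamma_nonneg (hq0 : 0 < q) (hq1 : q < 1) {α b : ℝ} (hα : 0 < α)
    (hb : 0 ≤ b) : 0 ≤ (1 - q) * b ^ α / qGamma q α :=
  div_nonneg (mul_nonneg (sub_pos.2 hq1).le (Real.rpow_nonneg hb α)) (qGamma_pos hq0 hq1 hα).le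

theorem qGamma_add_one (hq0 : 0 < q) (hq1 : q < 1) {x : ℝ} (hx : 0 < x) :
    qGamma q (x + 1) = qBracket q x * qGamma q x := by
  have h1q : 0 < 1 - q := sub_pos.2 hq1
  have hP : 0 < qPochInf q (q ^ (x + 1)) := qPochInf_rpow_pos hq0 hq1 (by linarith)
  have hexp : (1 - q) ^ (1 - x) = (1 - q) ^ (1 - (x + 1)) * (1 - q) := by
    rw [← Real.rpow_add_one h1q.ne']
    ring_nf
  rw [qGamma, qGamma, qBracket, qPochInf_rpow_eq_one_sub_mul hq0 hq1 hx, hexp]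
  have : 1 - q ^ x ≠ 0 := (sub_pos.2 (Real.rpow_lt_one hq0.le hq1 hx)).ne'
  field_simp

end qGamma

section kernel

variable {q α : ℝ}

theorem qPoch_pow_succ_sub_one (hq0 : 0 < q) (α : ℝ) (m : ℕ) :
    qPoch q (q ^ (m + 1)) (α - 1) =
      qPochInf q (q ^ ((m : ℝ) + 1)) / qPochInf q (q ^ ((m : ℝ) + α)) := by
  have hcast : (q ^ (m + 1) : ℝ) = q ^ ((m : ℝ) + 1) := by
    rw [← Real.rpow_natCast]; push_cast; rfl
  rw [qPoch, hcast, ← Real.rpow_add hq0]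
  ring_nf

theorem qPoch_pow_succ_sub_one_nonneg (hq0 : 0 < q) (hq1 : q < 1) (hα : 0 < α) (m : ℕ) :
    0 ≤ qPoch q (q ^ (m + 1)) (α - 1) := by
  rw [qPoch_pow_succ_sub_one hq0]
  exact div_nonneg (qPochInf_rpow_pos hq0 hq1 (by positivity)).le
    (qPochInf_rpow_pos hq0 hq1 (by positivity)).le

theorem sum_antidiagonal_rpow_pow_mul_qPoch (hq0 : 0 < q) (hq1 : q < 1) (hα : 0 < α) (j : ℕ) :
    ∑ p ∈ antidiagonal j, (q ^ α) ^ p.1 * qPoch q (q ^ (p.2 + 1)) (α - 1) =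
      qPochInf q (q ^ ((j : ℝ) + 1)) / ((1 - q ^ α) * qPochInf q (q ^ ((j : ℝ) + 1 + α))) := by
  have hr : 0 < 1 - q ^ α := sub_pos.2 (Real.rpow_lt_one hq0.le hq1 hα)
  induction j with
  | zero =>
    rw [Finset.Nat.antidiagonal_zero, Finset.sum_singleton, pow_zero, one_mul,
      qPoch_pow_succ_sub_one hq0, Nat.cast_zero, zero_add, zero_add,
      qPochInf_rpow_eq_one_sub_mul hq0 hq1 hα, add_comm α]
  | succ j ih =>
    have hstep : ∑ p ∈ antidiagonal (j + 1), (q ^ α) ^ p.1 * qPoch q (q ^ (p.2 + 1)) (α - 1) =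
        qPoch q (q ^ (j + 1 + 1)) (α - 1) +
          q ^ α * ∑ p ∈ antidiagonal j, (q ^ α) ^ p.1 * qPoch q (q ^ (p.2 + 1)) (α - 1) := by
      simp only [Finset.Nat.sum_antidiagonal_succ, Finset.mul_sum, pow_zero, one_mul, pow_succ]
      ring_nf
    have hu : q ^ ((j : ℝ) + 1 + α) = q ^ ((j : ℝ) + 1) * q ^ α := Real.rpow_add hq0 _ _
    have hA := qPochInf_rpow_eq_one_sub_mul hq0 hq1 (s := (j : ℝ) + 1) (by positivity)
    have hB := qPochInf_rpow_eq_one_sub_mul hq0 hq1 (s := (j : ℝ) + 1 + α) (by positivity)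
    have hB0 := qPochInf_rpow_pos hq0 hq1 (s := (j : ℝ) + 1 + α + 1) (by positivity)
    have hur : 0 < 1 - q ^ ((j : ℝ) + 1) * q ^ α :=
      hu ▸ sub_pos.2 (Real.rpow_lt_one hq0.le hq1 (by positivity))
    rw [hstep, ih, qPoch_pow_succ_sub_one hq0]
    push_cast
    rw [hA, hB, hu, show (j : ℝ) + 1 + 1 + α = (j : ℝ) + 1 + α + 1 by ring]
    field_simp
    ring

theorem sum_antidiagonal_rpow_pow_mul_qPoch_le (hq0 : 0 < q) (hq1 : q < 1) (hα : 0 < α) (j : ℕ) :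
    ∑ p ∈ antidiagonal j, (q ^ α) ^ p.1 * qPoch q (q ^ (p.2 + 1)) (α - 1) ≤
      (1 - q ^ α)⁻¹ := by
  have hr : 0 < 1 - q ^ α := sub_pos.2 (Real.rpow_lt_one hq0.le hq1 hα)
  rw [sum_antidiagonal_rpow_pow_mul_qPoch hq0 hq1 hα, div_le_iff₀
    (mul_pos hr (qPochInf_rpow_pos hq0 hq1 (by positivity))), inv_mul_cancel_left₀ hr.ne']
  exact qPochInf_rpow_le_rpow hq0 hq1 (by positivity) (by linarith)

end kernel

theorem Iq_eq_tsum {q α x : ℝ} (f : ℝ → ℝ) (hα : α ≠ 0) (hx : x ≠ 0) :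
    Iq q α f x = (1 - q) * x ^ α / qGamma q α *
      ∑' m : ℕ, q ^ m * (qPoch q (q ^ (m + 1)) (α - 1) * f (x * q ^ m)) := by
  have hnode : ∀ m : ℕ, q * (x * q ^ m) / x = q ^ (m + 1) := fun m => by
    field_simp; ring
  simp only [Iq, if_neg hα, jackson, hnode, Real.rpow_sub_one hx]
  field_simp

theorem pow_mul_abs_Iq_le {q α b : ℝ} (f : ℝ → ℝ) (hq0 : 0 < q) (hq1 : q < 1) (hα : 0 < α)
    (hb : 0 < b) (n : ℕ)
    (hs : Summable fun m : ℕ => (q ^ α) ^ n * qPoch q (q ^ (m + 1)) (α - 1) *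
      (q ^ (n + m) * |f (b * q ^ (n + m))|)) :
    q ^ n * |Iq q α f (b * q ^ n)| ≤ (1 - q) * b ^ α / qGamma q α *
      ∑' m : ℕ, (q ^ α) ^ n * qPoch q (q ^ (m + 1)) (α - 1) *
        (q ^ (n + m) * |f (b * q ^ (n + m))|) := by
  have hK := one_sub_mul_rpow_div_qGamma_nonneg hq0 hq1 hα hb.le
  have hnode : q ^ n * Iq q α f (b * q ^ n) = (1 - q) * b ^ α / qGamma q α *
      ∑' m : ℕ, (q ^ α) ^ n * qPoch q (q ^ (m + 1)) (α - 1) *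
        (q ^ (n + m) * f (b * q ^ (n + m))) := by
    rw [Iq_eq_tsum f hα.ne' (by positivity), Real.mul_rpow hb.le (by positivity),
      ← Real.rpow_pow_comm hq0.le, ← tsum_mul_left, ← tsum_mul_left, ← tsum_mul_left]
    congr 1
    ext m
    simp only [pow_add, mul_assoc]
    ring
  have hterm : ∀ m : ℕ, ‖(q ^ α) ^ n * qPoch q (q ^ (m + 1)) (α - 1) *
      (q ^ (n + m) * f (b * q ^ (n + m)))‖ = (q ^ α) ^ n * qPoch q (q ^ (m + 1)) (α - 1) *
      (q ^ (n + m) * |f (b * q ^ (n + m))|) := fun m => by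
    have := qPoch_pow_succ_sub_one_nonneg hq0 hq1 hα m
    have := Real.rpow_pos_of_pos hq0 α
    rw [Real.norm_eq_abs, abs_mul, abs_mul, abs_mul, abs_of_nonneg (by positivity),
      abs_of_nonneg (by positivity), abs_of_nonneg (by positivity)]
  calc q ^ n * |Iq q α f (b * q ^ n)| = |q ^ n * Iq q α f (b * q ^ n)| := by
        rw [abs_mul, abs_of_pos (pow_pos hq0 n)]
    _ = (1 - q) * b ^ α / qGamma q α * |∑' m : ℕ, (q ^ α) ^ n * qPoch q (q ^ (m + 1)) (α - 1) *
        (q ^ (n + m) * f (b * q ^ (n + m)))| := by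
        rw [hnode, abs_mul, abs_of_nonneg hK]
    _ ≤ _ := by
        gcongr
        rw [← Real.norm_eq_abs]
        exact (norm_tsum_le_tsum_norm (hs.congr fun m => (hterm m).symm)).trans_eq
          (tsum_congr hterm)

theorem tsum_pow_mul_abs_Iq_le {q α b : ℝ} (f : ℝ → ℝ) (hq0 : 0 < q) (hq1 : q < 1) (hα : 0 < α)
    (hb : 0 < b) (hf : MemL1q q b f) :
    ∑' n : ℕ, q ^ n * |Iq q α f (b * q ^ n)| ≤
      (1 - q) * b ^ α / qGamma q α * ((1 - q ^ α)⁻¹ * ∑' j : ℕ, q ^ j * |f (b * q ^ j)|) := by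
  have hx : 0 ≤ fun n : ℕ => (q ^ α) ^ n := fun n => pow_nonneg (Real.rpow_nonneg hq0.le α) n
  have hy : 0 ≤ fun m : ℕ => qPoch q (q ^ (m + 1)) (α - 1) :=
    qPoch_pow_succ_sub_one_nonneg hq0 hq1 hα
  have hz : 0 ≤ fun j : ℕ => q ^ j * |f (b * q ^ j)| := fun j => by positivity
  have hC := sum_antidiagonal_rpow_pow_mul_qPoch_le hq0 hq1 hα
  have hG := summable_mul_mul_add hx hy hz hf hC
  have hnode n := pow_mul_abs_Iq_le f hq0 hq1 hα hb n (hG.prod_factor n)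
  have hK := one_sub_mul_rpow_div_qGamma_nonneg hq0 hq1 hα hb.le
  calc ∑' n : ℕ, q ^ n * |Iq q α f (b * q ^ n)|
      ≤ ∑' n : ℕ, (1 - q) * b ^ α / qGamma q α * ∑' m : ℕ, (q ^ α) ^ n *
          qPoch q (q ^ (m + 1)) (α - 1) * (q ^ (n + m) * |f (b * q ^ (n + m))|) :=
      Summable.tsum_le_tsum hnode (.of_nonneg_of_le (fun n => by positivity) hnode
        (hG.prod.mul_left _)) (hG.prod.mul_left _)
    _ ≤ _ := by
      rw [tsum_mul_left]
      exact mul_le_mul_of_nonneg_left (tsum_tsum_mul_mul_add_le hx hy hz hf hC) hK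

theorem Iq_L1_bounded (q α b : ℝ) (f : ℝ → ℝ) (hq0 : 0 < q) (hq1 : q < 1)
    (hα : 0 < α) (hb : 0 < b) (hf : MemL1q q b f) :
    L1qNorm q b (fun x => Iq q α f x) ≤ b ^ α / qGamma q (α + 1) * L1qNorm q b f := by
  have h1q : 0 < 1 - q := sub_pos.2 hq1
  have hΓ := qGamma_pos hq0 hq1 hα
  have hqα : 0 < 1 - q ^ α := sub_pos.2 (Real.rpow_lt_one hq0.le hq1 hα)
  calc L1qNorm q b (fun x => Iq q α f x)
      = (1 - q) * b * ∑' n : ℕ, q ^ n * |Iq q α f (b * q ^ n)| := rfl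
    _ ≤ (1 - q) * b * ((1 - q) * b ^ α / qGamma q α *
          ((1 - q ^ α)⁻¹ * ∑' j : ℕ, q ^ j * |f (b * q ^ j)|)) :=
      mul_le_mul_of_nonneg_left (tsum_pow_mul_abs_Iq_le f hq0 hq1 hα hb hf) (by positivity)
    _ = b ^ α / qGamma q (α + 1) * L1qNorm q b f := by
      rw [qGamma_add_one hq0 hq1 hα, qBracket, L1qNorm]
      field_simp
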